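/- Theorem (half-space operators on the border of the Banach triangle): Let w1, w2 ∈ ℝ² be linearly independent. Then sup over rectangles R ⊆ ℝ² of finite positive measure of the ratio ‖S_{(w1,w2)}(χ_R, χ_R)‖_{L¹(ℝ²)} / |R| is infinite (the principal value defining S_{(w1,w2)}(χ_R,χ_R)(x) existing for almost every x). Consequently, for every p ∈ [1,∞] with conjugate exponent p', there is no constant C such that ‖S_{(w1,w2)}(f,g)‖_{L¹(ℝ²)} ≤ C ‖f‖_{L^p(ℝ²)} ‖g‖_{L^{p'}(ℝ²)} for all indicator functions f, g of rectangles; i.e., S_{(w1,w2)} is unbounded from L^p(ℝ²)×L^{p'}(ℝ²) to L¹(ℝ²). -/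

import Mathlib

open MeasureTheory Filter Topology Set ENNReal

noncomputable section

abbrev V2 : Type := ℝ × ℝ

def dot2 (x y : V2) : ℝ := x.1 * y.1 + x.2 * y.2

/-- Rotation of a vector of ℝ² by +90 degrees. -/
def perp (u : V2) : V2 := (-u.2, u.1)

/-- The closed rectangle with corner `c`, unit side direction `u` (and `perp u`),
and side lengths `l1` (in direction `u`) and `l2`. -/
def rectSet (c u : V2) (l1 l2 : ℝ) : Set V2 :=
  {x | ∃ s t : ℝ, s ∈ Set.Icc 0 l1 ∧ t ∈ Set.Icc 0 l2 ∧ x = c + s • u + t • perp u}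

/-- The `δ`-truncation of the directional bilinear Hilbert transform
`S_{(w₁,w₂)}(f,g)(x) = p.v.∫ f(x−tw₁) g(x−tw₂) dt/t`. -/
def truncS (w1 w2 : V2) (f g : V2 → ℝ) (x : V2) (δ : ℝ) : ℝ :=
  ∫ t in {t : ℝ | δ < |t| ∧ |t| < δ⁻¹}, f (x - t • w1) * g (x - t • w2) / t

/-- `L` is the principal value `S_{(w₁,w₂)}(f,g)(x)`. -/
def SPV (w1 w2 : V2) (f g : V2 → ℝ) (x : V2) (L : ℝ) : Prop :=
  Filter.Tendsto (truncS w1 w2 f g x) (𝓝[>] (0 : ℝ)) (𝓝 L)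

/-!
For convex compact `R` and `w₁ ≠ 0`, the times `t` with `x - t • w₁, x - t • w₂ ∈ R` form a
compact interval `[A, B]`, so the truncated integrals of `dt / t` are eventually constant, equal to
`log (|B| / |A|)`, as soon as `A, B ≠ 0`. An endpoint can only vanish when `x ∈ frontier R`,
which is null because `R` is convex.

For the blow-up, take `u ∥ w₁ - w₂`: then `w₁` and `w₂` have the same component `β > 0`
along `perp u`. For the long rectangle `[0, 4K] × [0, 1]` in the frame `(u, perp u)` and a point
at height `q > 1` above it and at distance `≥ K` from its short sides, the interval is
`[(q - 1) / β, q / β]`, so `S(χ_R, χ_R) = log (q / (q - 1)) ≥ 1 / q`. Each dyadic strip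
`2 ^ k < q ≤ 2 ^ (k + 1)` then contributes `|R| / 4` to `‖S(χ_R, χ_R)‖₁`, and `K` can be taken
so large that arbitrarily many strips qualify. Finally `‖χ_R‖_p ‖χ_R‖_{p'} = |R|`.
-/

open scoped Pointwise

def visitTimes {E : Type*} [AddCommGroup E] [Module ℝ E] (w1 w2 : E) (R : Set E) (x : E) :
    Set ℝ :=
  {t | x - t • w1 ∈ R ∧ x - t • w2 ∈ R}

section visitTimes

variable {E : Type*} [NormedAddCommGroup E] [NormedSpace ℝ E] {w1 w2 : E} {R : Set E}

lemma measurableSet_visitTimes [MeasurableSpace E] [BorelSpace E]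
    (hR : MeasurableSet R) (x : E) : MeasurableSet (visitTimes w1 w2 R x) :=
  (hR.preimage (by fun_prop : Continuous fun t : ℝ => x - t • w1).measurable).inter
    (hR.preimage (by fun_prop : Continuous fun t : ℝ => x - t • w2).measurable)

lemma convex_visitTimes (hR : Convex ℝ R) (x : E) : Convex ℝ (visitTimes w1 w2 R x) := by
  have hline : ∀ w : E, Convex ℝ ((fun t : ℝ => x - t • w) ⁻¹' R) := fun w =>
    hR.affine_preimage ⟨fun t => x - t • w, -LinearMap.toSpanSingleton ℝ E w, by
      intro t s; simp only [vadd_eq_add, LinearMap.neg_apply,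
        LinearMap.toSpanSingleton_apply, add_smul]; abel⟩
  exact (hline w1).inter (hline w2)

lemma isClosed_visitTimes (hR : IsClosed R) (x : E) : IsClosed (visitTimes w1 w2 R x) :=
  (hR.preimage (by fun_prop)).inter (hR.preimage (by fun_prop))

lemma isCompact_visitTimes (hR : IsCompact R) (hw1 : w1 ≠ 0) (x : E) :
    IsCompact (visitTimes w1 w2 R x) := by
  have hline : IsCompact ((fun t : ℝ => x - t • w1) ⁻¹' R) := by
    change IsCompact ((fun t : ℝ => t • w1) ⁻¹' ((x - ·) ⁻¹' R))
    exact (isClosedEmbedding_smul_left hw1).isCompact_preimage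
      ((Homeomorph.subLeft x).isCompact_preimage.mpr hR)
  exact hline.inter_right (hR.isClosed.preimage (by fun_prop))

lemma zero_mem_visitTimes_iff {x : E} : (0 : ℝ) ∈ visitTimes w1 w2 R x ↔ x ∈ R := by
  simp [visitTimes]

lemma zero_mem_interior_visitTimes {x : E} (hx : x ∈ interior R) :
    (0 : ℝ) ∈ interior (visitTimes w1 w2 R x) := by
  have hline : ∀ w : E, (fun t : ℝ => x - t • w) ⁻¹' interior R ∈ 𝓝 (0 : ℝ) := fun w =>
    (isOpen_interior.preimage (by fun_prop)).mem_nhds (by simpa using hx)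
  exact mem_interior_iff_mem_nhds.mpr <| Filter.mem_of_superset
    (Filter.inter_mem (hline w1) (hline w2))
    fun t ht => ⟨interior_subset ht.1, interior_subset ht.2⟩

lemma zero_notMem_frontier_visitTimes (hR : IsClosed R) {x : E} (hx : x ∉ frontier R) :
    (0 : ℝ) ∉ frontier (visitTimes w1 w2 R x) := by
  rw [(isClosed_visitTimes hR x).frontier_eq, Set.mem_sdiff, not_and_not_right]
  rw [hR.frontier_eq, Set.mem_sdiff, not_and_not_right] at hx
  intro h0
  exact zero_mem_interior_visitTimes (hx (zero_mem_visitTimes_iff.mp h0))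

end visitTimes

section inverseIntegral

open Real

variable {A B δ : ℝ}

lemma integral_inv_Icc_of_zero_notMem (hAB : A ≤ B) (h0 : (0 : ℝ) ∉ Icc A B) :
    ∫ t in Icc A B, t⁻¹ = log (|B| / |A|) := by
  rw [integral_Icc_eq_integral_Ioc, ← intervalIntegral.integral_of_le hAB,
    integral_inv (by rwa [uIcc_of_le hAB]), ← abs_div, log_abs]

lemma integral_inv_Ico_union_Ioc (hδ : 0 < δ) (hA : A < -δ) (hB : δ < B) :
    ∫ t in Ico A (-δ) ∪ Ioc δ B, t⁻¹ = log (|B| / |A|) := by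
  have hint : ∀ a b : ℝ, (0 : ℝ) ∉ Icc a b → IntegrableOn (fun t : ℝ => t⁻¹) (Icc a b) :=
    fun a b h => (continuousOn_inv₀.mono fun t ht (h0 : t = 0) => h (h0 ▸ ht)).integrableOn_Icc
  have hneg : ∫ t in Ico A (-δ), t⁻¹ = log (δ / |A|) := by
    rw [integral_Ico_eq_integral_Ioc, ← intervalIntegral.integral_of_le hA.le,
      integral_inv_of_neg (by linarith) (by linarith), abs_of_neg (by linarith), div_neg, neg_div]
  have hpos : ∫ t in Ioc δ B, t⁻¹ = log (|B| / δ) := by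
    rw [← intervalIntegral.integral_of_le hB.le, integral_inv_of_pos hδ (by linarith),
      abs_of_pos (by linarith)]
  rw [setIntegral_union (disjoint_left.mpr fun t ht ht' => by linarith [ht.2, ht'.1])
      measurableSet_Ioc ((hint A (-δ) fun h => by linarith [h.2]).mono_set Ico_subset_Icc_self)
      ((hint δ B fun h => by linarith [h.1]).mono_set Ioc_subset_Icc_self),
    hneg, hpos, ← log_mul (div_pos hδ (abs_pos.mpr (by linarith))).ne'
      (div_pos (abs_pos.mpr (by linarith)) hδ).ne']
  congr 1
  field_simp

lemma Icc_diff_Icc_of_lt_of_lt (hδ : 0 < δ) (hA : A < -δ) (hB : δ < B) :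
    Icc A B \ Icc (-δ) δ = Ico A (-δ) ∪ Ioc δ B := by
  ext t
  simp only [Set.mem_sdiff, mem_union, mem_Icc, mem_Ico, mem_Ioc]
  constructor
  · rintro ⟨⟨hAt, htB⟩, hδt⟩
    by_cases ht : -δ ≤ t
    · exact Or.inr ⟨lt_of_not_ge fun h => hδt ⟨ht, h⟩, htB⟩
    · exact Or.inl ⟨hAt, lt_of_not_ge ht⟩
  · rintro (⟨hAt, ht⟩ | ⟨ht, htB⟩)
    · exact ⟨⟨hAt, by linarith⟩, fun h => by linarith [h.1]⟩
    · exact ⟨⟨by linarith, htB⟩, fun h => by linarith [h.2]⟩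

lemma Icc_diff_Icc_of_zero_notMem (h0 : (0 : ℝ) ∉ Icc A B) (hAδ : δ < |A|) (hBδ : δ < |B|) :
    Icc A B \ Icc (-δ) δ = Icc A B := by
  refine sdiff_eq_left.mpr (disjoint_left.mpr fun t ht hδt => ?_)
  rw [mem_Icc, ← abs_le] at hδt
  rw [mem_Icc, not_and_or, not_le, not_le] at h0
  rcases h0 with hA | hB
  · rw [abs_of_pos (hA.trans_le ht.1)] at hδt
    linarith [abs_of_pos hA, ht.1]
  · rw [abs_of_neg (ht.2.trans_lt hB)] at hδt
    linarith [abs_of_neg hB, ht.2]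

lemma integral_inv_Icc_diff_Icc (hδ : 0 < δ) (hAB : A ≤ B) (hAδ : δ < |A|) (hBδ : δ < |B|) :
    ∫ t in Icc A B \ Icc (-δ) δ, t⁻¹ = log (|B| / |A|) := by
  by_cases h0 : (0 : ℝ) ∈ Icc A B
  · have hA : A < -δ := by linarith [abs_of_nonpos h0.1]
    have hB : δ < B := by linarith [abs_of_nonneg h0.2]
    rw [Icc_diff_Icc_of_lt_of_lt hδ hA hB, integral_inv_Ico_union_Ioc hδ hA hB]
  · rw [Icc_diff_Icc_of_zero_notMem h0 hAδ hBδ, integral_inv_Icc_of_zero_notMem hAB h0]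

lemma truncation_inter_Icc (hAδ : |A| < δ⁻¹) (hBδ : |B| < δ⁻¹) :
    {t : ℝ | δ < |t| ∧ |t| < δ⁻¹} ∩ Icc A B = Icc A B \ Icc (-δ) δ := by
  ext t
  have hδt : t ∉ Icc (-δ) δ ↔ δ < |t| := by rw [mem_Icc, ← abs_le, not_le]
  simp only [mem_inter_iff, mem_ofPred_eq, Set.mem_sdiff, hδt]
  constructor
  · rintro ⟨⟨h, -⟩, hI⟩
    exact ⟨hI, h⟩
  · rintro ⟨hI, h⟩
    exact ⟨⟨h, (abs_le_max_abs_abs hI.1 hI.2).trans_lt (max_lt hAδ hBδ)⟩, hI⟩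

theorem tendsto_integral_inv_truncation_Icc (hAB : A ≤ B) (hA : A ≠ 0) (hB : B ≠ 0) :
    Tendsto (fun δ => ∫ t in {t : ℝ | δ < |t| ∧ |t| < δ⁻¹} ∩ Icc A B, t⁻¹) (𝓝[>] 0)
      (𝓝 (log (|B| / |A|))) := by
  have hsmall : ∀ c : ℝ, 0 < c → ∀ᶠ δ in 𝓝[>] (0 : ℝ), δ < c := fun c hc =>
    nhdsWithin_le_nhds (eventually_lt_nhds hc)
  have hA' := abs_pos.mpr hA
  have hB' := abs_pos.mpr hB
  refine tendsto_const_nhds.congr' ?_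
  filter_upwards [self_mem_nhdsWithin, hsmall _ hA', hsmall _ hB', hsmall _ (inv_pos.mpr hA'),
    hsmall _ (inv_pos.mpr hB')] with δ (hδ : 0 < δ) hAδ hBδ hAδ' hBδ'
  rw [truncation_inter_Icc ((lt_inv_comm₀ hδ hA').mp hAδ') ((lt_inv_comm₀ hδ hB').mp hBδ'),
    integral_inv_Icc_diff_Icc hδ hAB hAδ hBδ]

end inverseIntegral

section principalValue

variable {w1 w2 : V2} {R : Set V2}

lemma truncS_indicator (hR : MeasurableSet R) (x : V2) (δ : ℝ) :
    truncS w1 w2 (R.indicator fun _ => (1 : ℝ)) (R.indicator fun _ => (1 : ℝ)) x δ =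
      ∫ t in {t : ℝ | δ < |t| ∧ |t| < δ⁻¹} ∩ visitTimes w1 w2 R x, t⁻¹ := by
  rw [truncS, ← setIntegral_indicator (measurableSet_visitTimes hR x)]
  congr 1 with t
  by_cases h1 : x - t • w1 ∈ R <;> by_cases h2 : x - t • w2 ∈ R <;>
    simp [visitTimes, h1, h2]

lemma spv_of_visitTimes_eq_empty (hR : MeasurableSet R) {x : V2}
    (hx : visitTimes w1 w2 R x = ∅) :
    SPV w1 w2 (R.indicator fun _ => (1 : ℝ)) (R.indicator fun _ => (1 : ℝ)) x 0 :=
  tendsto_const_nhds.congr fun δ => by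
    rw [truncS_indicator hR, hx, inter_empty, setIntegral_empty]

lemma spv_of_visitTimes_eq_Icc (hR : MeasurableSet R) {x : V2} {A B : ℝ}
    (hx : visitTimes w1 w2 R x = Icc A B) (hAB : A ≤ B) (hA : A ≠ 0) (hB : B ≠ 0) :
    SPV w1 w2 (R.indicator fun _ => (1 : ℝ)) (R.indicator fun _ => (1 : ℝ)) x
      (Real.log (|B| / |A|)) := by
  refine (tendsto_integral_inv_truncation_Icc hAB hA hB).congr fun δ => ?_
  rw [truncS_indicator hR, hx]

lemma exists_spv_of_notMem_frontier (hconv : Convex ℝ R) (hcpt : IsCompact R) (hw1 : w1 ≠ 0)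
    {x : V2} (hx : x ∉ frontier R) :
    ∃ L, SPV w1 w2 (R.indicator fun _ => (1 : ℝ)) (R.indicator fun _ => (1 : ℝ)) x L := by
  set S := visitTimes w1 w2 R x
  rcases S.eq_empty_or_nonempty with hS | hS
  · exact ⟨0, spv_of_visitTimes_eq_empty hcpt.isClosed.measurableSet hS⟩
  have hIcc : S = Icc (sInf S) (sSup S) := eq_Icc_of_connected_compact
    ⟨hS, (convex_visitTimes hconv x).isPreconnected⟩ (isCompact_visitTimes hcpt hw1 x)
  have hAB : sInf S ≤ sSup S := nonempty_Icc.mp (hIcc ▸ hS)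
  have h0 : (0 : ℝ) ∉ frontier S := zero_notMem_frontier_visitTimes hcpt.isClosed hx
  rw [hIcc, frontier_Icc hAB, mem_insert_iff, mem_singleton_iff, not_or] at h0
  exact ⟨_, spv_of_visitTimes_eq_Icc hcpt.isClosed.measurableSet hIcc hAB
    (Ne.symm h0.1) (Ne.symm h0.2)⟩

theorem exists_ae_spv (hconv : Convex ℝ R) (hcpt : IsCompact R) (hw1 : w1 ≠ 0) :
    ∃ g : V2 → ℝ, ∀ᵐ x : V2,
      SPV w1 w2 (R.indicator fun _ => (1 : ℝ)) (R.indicator fun _ => (1 : ℝ)) x (g x) :=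
  ⟨fun x => Classical.epsilon (SPV w1 w2 _ _ x),
    (measure_eq_zero_iff_ae_notMem.mp (hconv.addHaar_frontier volume)).mono fun _ hx =>
      Classical.epsilon_spec (exists_spv_of_notMem_frontier hconv hcpt hw1 hx)⟩

end principalValue

section rectangle

def frame (u : V2) : V2 →ₗ[ℝ] V2 :=
  Matrix.toLin (Module.Basis.finTwoProd ℝ) (Module.Basis.finTwoProd ℝ) !![u.1, -u.2; u.2, u.1]

lemma frame_apply (u p : V2) : frame u p = p.1 • u + p.2 • perp u := by
  rw [frame, Matrix.toLin_finTwoProd_apply]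
  ext <;> simp only [perp, Prod.fst_add, Prod.snd_add, Prod.smul_fst, Prod.smul_snd, smul_eq_mul]
    <;> ring

lemma det_frame (u : V2) : LinearMap.det (frame u) = dot2 u u := by
  rw [frame, LinearMap.det_toLin, Matrix.det_fin_two_of, dot2]
  ring

lemma rectSet_eq_vadd_image (c u : V2) (l1 l2 : ℝ) :
    rectSet c u l1 l2 = c +ᵥ frame u '' (Icc 0 l1 ×ˢ Icc 0 l2) := by
  rw [← image_vadd, image_image]
  ext x
  simp only [rectSet, mem_ofPred_eq, mem_image, mem_prod, Prod.exists, frame_apply, vadd_eq_add]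
  constructor
  · rintro ⟨s, t, hs, ht, rfl⟩
    exact ⟨s, t, ⟨hs, ht⟩, by abel⟩
  · rintro ⟨s, t, ⟨hs, ht⟩, rfl⟩
    exact ⟨s, t, hs, ht, by abel⟩

lemma convex_rectSet (c u : V2) (l1 l2 : ℝ) : Convex ℝ (rectSet c u l1 l2) := by
  rw [rectSet_eq_vadd_image]
  exact ((convex_Icc 0 l1).prod (convex_Icc 0 l2)).linear_image (frame u) |>.vadd c

lemma isCompact_rectSet (c u : V2) (l1 l2 : ℝ) : IsCompact (rectSet c u l1 l2) := by
  rw [rectSet_eq_vadd_image]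
  exact (isCompact_Icc.prod isCompact_Icc).image (frame u).continuous_of_finiteDimensional
    |>.vadd c

lemma volume_frame_image {u : V2} (hu : dot2 u u = 1) (s : Set V2) :
    volume (frame u '' s) = volume s := by
  rw [Measure.addHaar_image_linearMap, det_frame, hu, abs_one, ENNReal.ofReal_one, one_mul]

lemma volume_rectSet (c : V2) {u : V2} (hu : dot2 u u = 1) (l1 l2 : ℝ) :
    volume (rectSet c u l1 l2) = ENNReal.ofReal l1 * ENNReal.ofReal l2 := by
  rw [rectSet_eq_vadd_image, measure_vadd, volume_frame_image hu, Measure.volume_eq_prod,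
    Measure.prod_prod, Real.volume_Icc, Real.volume_Icc, sub_zero, sub_zero]

end rectangle

section longRectangle

lemma det_ne_zero_of_linearIndependent {w1 w2 : V2} (hli : LinearIndependent ℝ ![w1, w2]) :
    w1.1 * w2.2 - w1.2 * w2.1 ≠ 0 := by
  have h := (Module.Basis.finTwoProd ℝ).is_basis_iff_det.mp
    ⟨hli, hli.span_eq_top_of_card_eq_finrank (by simp)⟩
  simpa [Module.Basis.det_apply, Matrix.det_fin_two, Module.Basis.toMatrix_apply, mul_comm w2.1]
    using h.ne_zero

lemma eq_frame_dot2 {u : V2} (hu : dot2 u u = 1) (w : V2) :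
    w = frame u (dot2 w u, dot2 w (perp u)) := by
  rw [frame_apply]
  simp only [dot2, perp] at hu ⊢
  ext <;> simp only [Prod.fst_add, Prod.snd_add, Prod.smul_fst, Prod.smul_snd, smul_eq_mul]
  · linear_combination (-w.1) * hu
  · linear_combination (-w.2) * hu

lemma dot2_self_pos {d : V2} (hd : d ≠ 0) : 0 < dot2 d d := by
  by_contra! h
  have h' : d.1 * d.1 + d.2 * d.2 ≤ 0 := h
  exact hd (Prod.ext (show d.1 = 0 by nlinarith) (show d.2 = 0 by nlinarith))

lemma dot2_smul_smul (m : ℝ) (d : V2) : dot2 (m • d) (m • d) = m ^ 2 * dot2 d d := by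
  simp only [dot2, Prod.smul_fst, Prod.smul_snd, smul_eq_mul]
  ring

lemma dot2_perp_smul (w : V2) (m : ℝ) (d : V2) : dot2 w (perp (m • d)) = m * dot2 w (perp d) := by
  simp only [dot2, perp, Prod.smul_fst, Prod.smul_snd, smul_eq_mul]
  ring

lemma exists_frame_coords {w1 w2 : V2} (hli : LinearIndependent ℝ ![w1, w2]) :
    ∃ u : V2, dot2 u u = 1 ∧ ∃ a1 a2 β : ℝ, 0 < β ∧
      w1 = frame u (a1, β) ∧ w2 = frame u (a2, β) := by
  set D := w1.1 * w2.2 - w1.2 * w2.1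
  have hD : D ≠ 0 := det_ne_zero_of_linearIndependent hli
  -- `d ∥ w₁ - w₂` gives `w₁, w₂` equal components along `perp d`; the factor `D` makes them `> 0`
  set d : V2 := D • (w1 - w2)
  have hwd : dot2 w1 (perp d) = D ^ 2 ∧ dot2 w2 (perp d) = D ^ 2 := by
    constructor <;>
      simp only [dot2, perp, d, D, Prod.fst_sub, Prod.snd_sub, Prod.smul_fst, Prod.smul_snd,
        smul_eq_mul] <;> ring
  have hd : 0 < dot2 d d := dot2_self_pos fun hd => hD <| pow_eq_zero_iff two_ne_zero |>.mp <| by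
    rw [← hwd.1, hd, dot2, perp]
    simp
  set m := (√(dot2 d d))⁻¹
  have hu : dot2 (m • d) (m • d) = 1 := by
    rw [dot2_smul_smul, inv_pow, Real.sq_sqrt hd.le, inv_mul_cancel₀ hd.ne']
  refine ⟨m • d, hu, dot2 w1 (m • d), dot2 w2 (m • d), m * D ^ 2, by positivity, ?_, ?_⟩
  · rw [← hwd.1, ← dot2_perp_smul]; exact eq_frame_dot2 hu w1
  · rw [← hwd.2, ← dot2_perp_smul]; exact eq_frame_dot2 hu w2

lemma dot2_frame {u : V2} (hu : dot2 u u = 1) (p : V2) :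
    (dot2 (frame u p) u, dot2 (frame u p) (perp u)) = p := by
  rw [frame_apply]
  simp only [dot2, perp] at hu ⊢
  ext <;> simp only [Prod.fst_add, Prod.snd_add, Prod.smul_fst, Prod.smul_snd, smul_eq_mul]
  · linear_combination p.1 * hu
  · linear_combination p.2 * hu

lemma frame_injective {u : V2} (hu : dot2 u u = 1) : Function.Injective (frame u) :=
  Function.LeftInverse.injective (g := fun x => (dot2 x u, dot2 x (perp u))) (dot2_frame hu)

lemma frame_mem_rectSet_zero_iff {u : V2} (hu : dot2 u u = 1) {l1 l2 : ℝ} {p : V2} :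
    frame u p ∈ rectSet 0 u l1 l2 ↔ p ∈ Icc 0 l1 ×ˢ Icc 0 l2 := by
  rw [rectSet_eq_vadd_image, zero_vadd, (frame_injective hu).mem_set_image]

lemma sub_mul_mem_Icc_zero_one_iff {q t β : ℝ} (hβ : 0 < β) :
    q - t * β ∈ Icc 0 1 ↔ t ∈ Icc ((q - 1) / β) (q / β) := by
  rw [mem_Icc, mem_Icc, div_le_iff₀ hβ, le_div_iff₀ hβ]
  constructor <;> rintro ⟨h1, h2⟩ <;> constructor <;> linarith

lemma inv_le_log_div_sub_one {q : ℝ} (hq : 1 < q) : q⁻¹ ≤ Real.log (q / (q - 1)) := by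
  have h := Real.one_sub_inv_le_log_of_pos (x := q / (q - 1)) (div_pos (by linarith) (by linarith))
  have hq' : 1 - (q / (q - 1))⁻¹ = q⁻¹ := by
    field_simp [(by linarith : q - 1 ≠ 0)]
    ring
  rwa [hq'] at h

variable {w1 w2 u : V2} {a1 a2 β K T : ℝ}

lemma visitTimes_frame (hu : dot2 u u = 1) (hβ : 0 < β) (hw1 : w1 = frame u (a1, β))
    (hw2 : w2 = frame u (a2, β)) {s q : ℝ} (hs : s ∈ Icc K (T - K)) (hq : 1 ≤ q)
    (hqK : q * (|a1| + |a2|) ≤ β * K) :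
    visitTimes w1 w2 (rectSet 0 u T 1) (frame u (s, q)) = Icc ((q - 1) / β) (q / β) := by
  have hmove : ∀ a t : ℝ, frame u (s, q) - t • frame u (a, β) = frame u (s - t * a, q - t * β) :=
    fun a t => by rw [← map_smul, ← map_sub]; simp
  have hlong : ∀ a t : ℝ, t ∈ Icc 0 (q / β) → q * |a| ≤ β * K → s - t * a ∈ Icc 0 T := by
    intro a t ht hqa
    have hta : |t * a| ≤ K := by
      rw [abs_mul, abs_of_nonneg ht.1]
      calc t * |a| ≤ q / β * |a| := by gcongr; exact ht.2
        _ ≤ K := by rw [div_mul_eq_mul_div, div_le_iff₀ hβ]; linarith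
    constructor <;> linarith [abs_le.mp hta, hs.1, hs.2]
  ext t
  simp only [visitTimes, mem_ofPred_eq, hw1, hw2, hmove, frame_mem_rectSet_zero_iff hu, mem_prod,
    sub_mul_mem_Icc_zero_one_iff hβ]
  constructor
  · exact fun h => h.1.2
  · intro ht
    have ht' : t ∈ Icc 0 (q / β) := ⟨(div_nonneg (by linarith) hβ.le).trans ht.1, ht.2⟩
    exact ⟨⟨hlong a1 t ht' (by nlinarith [abs_nonneg a2]), ht⟩,
      hlong a2 t ht' (by nlinarith [abs_nonneg a1]), ht⟩

lemma spv_frame (hu : dot2 u u = 1) (hβ : 0 < β) (hw1 : w1 = frame u (a1, β))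
    (hw2 : w2 = frame u (a2, β)) {s q : ℝ} (hs : s ∈ Icc K (T - K)) (hq : 1 < q)
    (hqK : q * (|a1| + |a2|) ≤ β * K) :
    SPV w1 w2 (Set.indicator (rectSet 0 u T 1) fun _ => (1 : ℝ))
      (Set.indicator (rectSet 0 u T 1) fun _ => (1 : ℝ)) (frame u (s, q))
      (Real.log (q / (q - 1))) := by
  have hA : 0 < (q - 1) / β := div_pos (by linarith) hβ
  have hB : 0 < q / β := div_pos (by linarith) hβ
  have h := spv_of_visitTimes_eq_Icc (isCompact_rectSet 0 u T 1).isClosed.measurableSet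
    (visitTimes_frame hu hβ hw1 hw2 hs hq.le hqK) (by gcongr; linarith) hA.ne' hB.ne'
  rwa [abs_of_pos hA, abs_of_pos hB, div_div_div_cancel_right₀ hβ.ne'] at h

def dyadicStrip (u : V2) (K T : ℝ) (k : ℕ) : Set V2 :=
  frame u '' (Icc K (T - K) ×ˢ Ioc (2 ^ k) (2 ^ (k + 1)))

lemma measurableSet_dyadicStrip (hu : dot2 u u = 1) (k : ℕ) :
    MeasurableSet (dyadicStrip u K T k) :=
  (LinearMap.isClosedEmbedding_of_injective (LinearMap.ker_eq_bot.mpr (frame_injective hu)))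
    |>.measurableEmbedding.measurableSet_image.mpr (measurableSet_Icc.prod measurableSet_Ioc)

lemma pairwiseDisjoint_dyadicStrip (hu : dot2 u u = 1) (N : ℕ) :
    (Finset.range N : Set ℕ).PairwiseDisjoint (dyadicStrip u K T) := by
  intro k _ l _ hkl
  refine (disjoint_image_iff (frame_injective hu)).mpr (disjoint_prod.mpr (Or.inr ?_))
  have hpow : ∀ {k l : ℕ}, k < l → (2 : ℝ) ^ (k + 1) ≤ 2 ^ l := fun h =>
    pow_le_pow_right₀ one_le_two h
  rcases hkl.lt_or_gt with h | h
  · exact Ioc_disjoint_Ioc_of_le (hpow h)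
  · exact (Ioc_disjoint_Ioc_of_le (hpow h)).symm

lemma volume_dyadicStrip (hu : dot2 u u = 1) (k : ℕ) :
    volume (dyadicStrip u K T k) = ENNReal.ofReal (T - 2 * K) * ENNReal.ofReal (2 ^ k) := by
  rw [dyadicStrip, volume_frame_image hu, Measure.volume_eq_prod, Measure.prod_prod,
    Real.volume_Icc, Real.volume_Ioc]
  congr 2 <;> ring

lemma lintegral_dyadicStrip_ge (hu : dot2 u u = 1) (hβ : 0 < β) (hw1 : w1 = frame u (a1, β))
    (hw2 : w2 = frame u (a2, β)) {k : ℕ} (hkK : 2 ^ (k + 1) * (|a1| + |a2|) ≤ β * K)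
    {g : V2 → ℝ} (hg : ∀ᵐ x : V2,
      SPV w1 w2 (Set.indicator (rectSet 0 u T 1) fun _ => (1 : ℝ))
        (Set.indicator (rectSet 0 u T 1) fun _ => (1 : ℝ)) x (g x)) :
    ENNReal.ofReal ((T - 2 * K) / 2) ≤ ∫⁻ x in dyadicStrip u K T k, ENNReal.ofReal |g x| := by
  have hbound : ∀ᵐ x ∂volume.restrict (dyadicStrip u K T k),
      ENNReal.ofReal (2 ^ (k + 1))⁻¹ ≤ ENNReal.ofReal |g x| := by
    rw [ae_restrict_iff' (measurableSet_dyadicStrip hu k)]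
    filter_upwards [hg] with x hx
    rintro ⟨⟨s, q⟩, ⟨hs, hq⟩, rfl⟩
    have hq1 : 1 < q := lt_of_le_of_lt (one_le_pow₀ one_le_two) hq.1
    have hqK : q * (|a1| + |a2|) ≤ β * K :=
      (mul_le_mul_of_nonneg_right hq.2 (by positivity)).trans hkK
    rw [tendsto_nhds_unique hx (spv_frame hu hβ hw1 hw2 hs hq1 hqK)]
    refine ENNReal.ofReal_le_ofReal ?_
    calc (2 ^ (k + 1) : ℝ)⁻¹ ≤ q⁻¹ := inv_anti₀ (by linarith) hq.2
      _ ≤ Real.log (q / (q - 1)) := inv_le_log_div_sub_one hq1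
      _ ≤ |Real.log (q / (q - 1))| := le_abs_self _
  calc ENNReal.ofReal ((T - 2 * K) / 2)
      = ENNReal.ofReal (2 ^ (k + 1))⁻¹ * volume (dyadicStrip u K T k) := by
        rw [volume_dyadicStrip hu, ← ENNReal.ofReal_mul' (by positivity),
          ← ENNReal.ofReal_mul (by positivity)]
        congr 1
        field_simp
        ring
    _ = ∫⁻ _ in dyadicStrip u K T k, ENNReal.ofReal (2 ^ (k + 1))⁻¹ := (setLIntegral_const _ _).symm
    _ ≤ ∫⁻ x in dyadicStrip u K T k, ENNReal.ofReal |g x| := lintegral_mono_ae hbound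

end longRectangle

theorem exists_rectSet_lintegral_spv_ge {w1 w2 : V2} (hli : LinearIndependent ℝ ![w1, w2])
    (M : ℝ) :
    ∃ (c u : V2) (l1 l2 : ℝ), dot2 u u = 1 ∧ 0 < l1 ∧ 0 < l2 ∧
      ∀ g : V2 → ℝ,
        (∀ᵐ x : V2,
          SPV w1 w2 (Set.indicator (rectSet c u l1 l2) fun _ => (1 : ℝ))
            (Set.indicator (rectSet c u l1 l2) fun _ => (1 : ℝ)) x (g x)) →
        ENNReal.ofReal M * volume (rectSet c u l1 l2) ≤ ∫⁻ x : V2, ENNReal.ofReal |g x| := by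
  obtain ⟨u, hu, a1, a2, β, hβ, hw1, hw2⟩ := exists_frame_coords hli
  set N := ⌈4 * M⌉₊
  set K := (2 ^ N * (|a1| + |a2|) + 1) / β
  have hK : 0 < K := by positivity
  have hkK : ∀ k ∈ Finset.range N, 2 ^ (k + 1) * (|a1| + |a2|) ≤ β * K := by
    intro k hk
    have hpow : (2 : ℝ) ^ (k + 1) ≤ 2 ^ N := pow_le_pow_right₀ one_le_two (Finset.mem_range.mp hk)
    rw [mul_div_cancel₀ _ hβ.ne']
    nlinarith [abs_nonneg a1, abs_nonneg a2]
  refine ⟨0, u, 4 * K, 1, hu, by positivity, one_pos, fun g hg => ?_⟩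
  calc ENNReal.ofReal M * volume (rectSet 0 u (4 * K) 1)
      ≤ ∑ _k ∈ Finset.range N, ENNReal.ofReal ((4 * K - 2 * K) / 2) := by
        rw [volume_rectSet 0 hu, ENNReal.ofReal_one, mul_one, ← ENNReal.ofReal_mul' (by positivity),
          Finset.sum_const, Finset.card_range, nsmul_eq_mul, ← ENNReal.ofReal_natCast,
          ← ENNReal.ofReal_mul N.cast_nonneg]
        refine ENNReal.ofReal_le_ofReal ?_
        nlinarith [Nat.le_ceil (4 * M)]
    _ ≤ ∑ k ∈ Finset.range N, ∫⁻ x in dyadicStrip u K (4 * K) k, ENNReal.ofReal |g x| :=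
        Finset.sum_le_sum fun k hk => lintegral_dyadicStrip_ge hu hβ hw1 hw2 (hkK k hk) hg
    _ = ∫⁻ x in ⋃ k ∈ Finset.range N, dyadicStrip u K (4 * K) k, ENNReal.ofReal |g x| :=
        (lintegral_biUnion_finset (pairwiseDisjoint_dyadicStrip hu N)
          (fun k _ => measurableSet_dyadicStrip hu k) _).symm
    _ ≤ ∫⁻ x, ENNReal.ofReal |g x| := setLIntegral_le_lintegral _ _

lemma eLpNorm_indicator_one_mul_eLpNorm {α : Type*} [MeasurableSpace α] {μ : Measure α}
    {s : Set α} (hs : MeasurableSet s) (hμs₀ : μ s ≠ 0) (hμs : μ s ≠ ∞) {p q : ℝ≥0∞}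
    (hpq : p⁻¹ + q⁻¹ = 1) :
    eLpNorm (s.indicator fun _ => (1 : ℝ)) p μ * eLpNorm (s.indicator fun _ => (1 : ℝ)) q μ =
      μ s := by
  have hp : p ≠ 0 := by rintro rfl; simp at hpq
  have hq : q ≠ 0 := by rintro rfl; simp at hpq
  rw [eLpNorm_indicator_const' hs hμs₀ hp, eLpNorm_indicator_const' hs hμs₀ hq, enorm_one,
    one_mul, one_mul, ← ENNReal.rpow_add _ _ hμs₀ hμs, one_div, one_div, ← ENNReal.toReal_inv,
    ← ENNReal.toReal_inv, ← ENNReal.toReal_add (ENNReal.inv_ne_top.mpr hp)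
    (ENNReal.inv_ne_top.mpr hq), hpq, ENNReal.toReal_one, ENNReal.rpow_one]

/-- **Theorem (half-space operators on the border of the Banach triangle).**
For linearly independent `w₁, w₂`:
(i) for every rectangle `R` the principal value `S_{(w₁,w₂)}(χ_R,χ_R)(x)` exists for
a.e. `x`; (ii) the ratios `‖S_{(w₁,w₂)}(χ_R,χ_R)‖₁ / |R|` over rectangles `R` are
unbounded; (iii) consequently for every `p ∈ [1,∞]` and conjugate `p'` there is no
constant `C` with `‖S(f,g)‖₁ ≤ C‖f‖_p‖g‖_{p'}` for all indicators of rectangles. -/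
theorem halfspace_border_banach (w1 w2 : V2)
    (hli : LinearIndependent ℝ ![w1, w2]) :
    (∀ (c u : V2) (l1 l2 : ℝ), dot2 u u = 1 → 0 < l1 → 0 < l2 →
      ∃ g : V2 → ℝ, ∀ᵐ x : V2,
        SPV w1 w2 (Set.indicator (rectSet c u l1 l2) fun _ => (1 : ℝ))
          (Set.indicator (rectSet c u l1 l2) fun _ => (1 : ℝ)) x (g x)) ∧
    (∀ M : ℝ, ∃ (c u : V2) (l1 l2 : ℝ), dot2 u u = 1 ∧ 0 < l1 ∧ 0 < l2 ∧
      ∀ g : V2 → ℝ,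
        (∀ᵐ x : V2,
          SPV w1 w2 (Set.indicator (rectSet c u l1 l2) fun _ => (1 : ℝ))
            (Set.indicator (rectSet c u l1 l2) fun _ => (1 : ℝ)) x (g x)) →
        ENNReal.ofReal M * volume (rectSet c u l1 l2) ≤
          (∫⁻ x : V2, ENNReal.ofReal (|g x|))) ∧
    ∀ p q : ℝ≥0∞, 1 ≤ p → 1 ≤ q → p⁻¹ + q⁻¹ = 1 →
      ¬ ∃ C : ℝ, ∀ (c1 u1 : V2) (l1 l1' : ℝ) (c2 u2 : V2) (l2 l2' : ℝ),
        dot2 u1 u1 = 1 → 0 < l1 → 0 < l1' → dot2 u2 u2 = 1 → 0 < l2 → 0 < l2' →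
        ∀ g : V2 → ℝ,
          (∀ᵐ x : V2,
            SPV w1 w2 (Set.indicator (rectSet c1 u1 l1 l1') fun _ => (1 : ℝ))
              (Set.indicator (rectSet c2 u2 l2 l2') fun _ => (1 : ℝ)) x (g x)) →
          (∫⁻ x : V2, ENNReal.ofReal (|g x|)) ≤ ENNReal.ofReal C *
            (eLpNorm (Set.indicator (rectSet c1 u1 l1 l1') fun _ => (1 : ℝ)) p volume *
              eLpNorm (Set.indicator (rectSet c2 u2 l2 l2') fun _ => (1 : ℝ)) q volume) := by
  have hw1 : w1 ≠ 0 := by simpa using hli.ne_zero 0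
  refine ⟨fun c u l1 l2 _ _ _ =>
    exists_ae_spv (convex_rectSet c u l1 l2) (isCompact_rectSet c u l1 l2) hw1,
    exists_rectSet_lintegral_spv_ge hli, ?_⟩
  rintro p q - - hpq ⟨C, hC⟩
  obtain ⟨c, u, l1, l2, hu, hl1, hl2, hlarge⟩ := exists_rectSet_lintegral_spv_ge hli (|C| + 1)
  obtain ⟨g, hg⟩ :=
    exists_ae_spv (w2 := w2) (convex_rectSet c u l1 l2) (isCompact_rectSet c u l1 l2) hw1
  have hvol := volume_rectSet c hu l1 l2
  have hR₀ : volume (rectSet c u l1 l2) ≠ 0 := by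
    rw [hvol]; exact mul_ne_zero (by simpa using hl1) (by simpa using hl2)
  have hR : volume (rectSet c u l1 l2) ≠ ∞ := by rw [hvol]; finiteness
  have hupper := hC c u l1 l2 c u l1 l2 hu hl1 hl2 hu hl1 hl2 g hg
  rw [eLpNorm_indicator_one_mul_eLpNorm (isCompact_rectSet c u l1 l2).isClosed.measurableSet
    hR₀ hR hpq] at hupper
  have hC' := (ENNReal.mul_le_mul_iff_left hR₀ hR).mp ((hlarge g hg).trans hupper)
  rcases ENNReal.ofReal_le_ofReal_iff'.mp hC' with h | h <;> linarith [le_abs_self C, abs_nonneg C]
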